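/- arXiv:2511.02442 — 2 statements merged into one kernel-verified Lean document; each statement's English description precedes it below -/
import Mathlib

section
/- For all n ≥ 2, |Av_n(132,231)| = 2^{n−1}, and the total number of consecutive occurrences of the pattern 321 over all permutations in Av_n(132,231) equals (n−1)·2^{n−2} − 2^{n−1} + 1. -/
/-- `ConsecOcc p π i`: the word `π(i) π(i+1) … π(i+r-1)` (positions `0`-indexed)
is order-isomorphic to the pattern word `p 0, …, p (r-1)`. -/
def ConsecOcc {n r : ℕ} (p : Fin r → ℕ) (π : Equiv.Perm (Fin n)) (i : ℕ) : Prop :=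
  ∃ h : i + r ≤ n, ∀ j k : Fin r,
    (π ⟨i + j.val, by have := j.isLt; omega⟩ < π ⟨i + k.val, by have := k.isLt; omega⟩
      ↔ p j < p k)

/-- The number of consecutive occurrences of the pattern `p` in `π`. -/
noncomputable def occCount {n r : ℕ} (p : Fin r → ℕ) (π : Equiv.Perm (Fin n)) : ℕ :=
  Nat.card {i : ℕ // ConsecOcc p π i}

/-- `π` has no consecutive occurrence of any pattern in `ps`. -/
def AvoidsAll {n r : ℕ} (ps : List (Fin r → ℕ)) (π : Equiv.Perm (Fin n)) : Prop :=
  ∀ p ∈ ps, ∀ i, ¬ ConsecOcc p π i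

-- Total number of consecutive occurrences of `p` over all size-`n` permutations satisfying `P`.
open scoped Classical in
noncomputable def totOcc {n r : ℕ} (p : Fin r → ℕ) (P : Equiv.Perm (Fin n) → Prop) : ℕ :=
  ∑ π : Equiv.Perm (Fin n), if P π then occCount p π else 0

/-- The number of size-`n` permutations satisfying `P`. -/
noncomputable def classCard (n : ℕ) (P : Equiv.Perm (Fin n) → Prop) : ℕ :=
  Nat.card {π : Equiv.Perm (Fin n) // P π}

def p123 : Fin 3 → ℕ := ![1,2,3]
def p132 : Fin 3 → ℕ := ![1,3,2]
def p213 : Fin 3 → ℕ := ![2,1,3]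
def p231 : Fin 3 → ℕ := ![2,3,1]
def p312 : Fin 3 → ℕ := ![3,1,2]
def p321 : Fin 3 → ℕ := ![3,2,1]

namespace Stmt17

variable {n : ℕ}

/-! ### Characterization of consecutive occurrences of the 3-patterns -/

lemma consecOcc_132 (π : Equiv.Perm (Fin n)) (i : ℕ) :
    ConsecOcc p132 π i ↔ ∃ h : i + 3 ≤ n,
      π ⟨i, by omega⟩ < π ⟨i+2, by omega⟩ ∧ π ⟨i+2, by omega⟩ < π ⟨i+1, by omega⟩ := by
  constructor
  · rintro ⟨h, H⟩
    exact ⟨h, (H 0 2).mpr (by decide), (H 2 1).mpr (by decide)⟩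
  · rintro ⟨h, h1, h2⟩
    refine ⟨h, ?_⟩
    have h3 : π ⟨i, by omega⟩ < π ⟨i+1, by omega⟩ := h1.trans h2
    intro j k
    fin_cases j <;> fin_cases k <;>
      simp only [p132, Fin.mk_zero, Fin.mk_one, Fin.val_zero, Fin.val_one, add_zero,
        Matrix.cons_val_zero, Matrix.cons_val_one, Matrix.head_cons, Fin.isValue] <;>
      constructor <;> intro hx <;>
      first
        | rfl
        | decide
        | omega
        | exact h1 | exact h2 | exact h3
        | exact absurd hx (by decide)
        | exact absurd hx (lt_asymm h1) | exact absurd hx (lt_asymm h2)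
        | exact absurd hx (lt_asymm h3)

lemma consecOcc_231 (π : Equiv.Perm (Fin n)) (i : ℕ) :
    ConsecOcc p231 π i ↔ ∃ h : i + 3 ≤ n,
      π ⟨i+2, by omega⟩ < π ⟨i, by omega⟩ ∧ π ⟨i, by omega⟩ < π ⟨i+1, by omega⟩ := by
  constructor
  · rintro ⟨h, H⟩
    exact ⟨h, (H 2 0).mpr (by decide), (H 0 1).mpr (by decide)⟩
  · rintro ⟨h, h1, h2⟩
    refine ⟨h, ?_⟩
    have h3 : π ⟨i+2, by omega⟩ < π ⟨i+1, by omega⟩ := h1.trans h2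
    intro j k
    fin_cases j <;> fin_cases k <;>
      simp only [p231, Fin.mk_zero, Fin.mk_one, Fin.val_zero, Fin.val_one, add_zero,
        Matrix.cons_val_zero, Matrix.cons_val_one, Matrix.head_cons, Fin.isValue] <;>
      constructor <;> intro hx <;>
      first
        | rfl
        | decide
        | omega
        | exact h1 | exact h2 | exact h3
        | exact absurd hx (by decide)
        | exact absurd hx (lt_asymm h1) | exact absurd hx (lt_asymm h2)
        | exact absurd hx (lt_asymm h3)

lemma consecOcc_321 (π : Equiv.Perm (Fin n)) (i : ℕ) :
    ConsecOcc p321 π i ↔ ∃ h : i + 3 ≤ n,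
      π ⟨i+1, by omega⟩ < π ⟨i, by omega⟩ ∧ π ⟨i+2, by omega⟩ < π ⟨i+1, by omega⟩ := by
  constructor
  · rintro ⟨h, H⟩
    exact ⟨h, (H 1 0).mpr (by decide), (H 2 1).mpr (by decide)⟩
  · rintro ⟨h, h1, h2⟩
    refine ⟨h, ?_⟩
    have h3 : π ⟨i+2, by omega⟩ < π ⟨i, by omega⟩ := h2.trans h1
    intro j k
    fin_cases j <;> fin_cases k <;>
      simp only [p321, Fin.mk_zero, Fin.mk_one, Fin.val_zero, Fin.val_one, add_zero,
        Matrix.cons_val_zero, Matrix.cons_val_one, Matrix.head_cons, Fin.isValue] <;>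
      constructor <;> intro hx <;>
      first
        | rfl
        | decide
        | omega
        | exact h1 | exact h2 | exact h3
        | exact absurd hx (by decide)
        | exact absurd hx (lt_asymm h1) | exact absurd hx (lt_asymm h2)
        | exact absurd hx (lt_asymm h3)

/-- no interior peak -/
def NoPeak (π : Equiv.Perm (Fin n)) : Prop :=
  ∀ i : ℕ, ∀ _h : i + 3 ≤ n,
    ¬ (π ⟨i, by omega⟩ < π ⟨i+1, by omega⟩ ∧ π ⟨i+2, by omega⟩ < π ⟨i+1, by omega⟩)

lemma avoids_iff_noPeak (π : Equiv.Perm (Fin n)) :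
    AvoidsAll [p132, p231] π ↔ NoPeak π := by
  constructor
  · intro hA i h hpk
    obtain ⟨h1, h2⟩ := hpk
    have hne : π ⟨i, by omega⟩ ≠ π ⟨i+2, by omega⟩ := by
      intro he
      have := π.injective he
      simp only [Fin.mk.injEq] at this
      omega
    rcases lt_or_gt_of_ne hne with hlt | hgt
    · exact hA p132 (by simp) i ((consecOcc_132 π i).mpr ⟨h, hlt, h2⟩)
    · exact hA p231 (by simp) i ((consecOcc_231 π i).mpr ⟨h, hgt, h1⟩)
  · intro hN p hp i hocc
    simp only [List.mem_cons, List.mem_singleton, List.not_mem_nil, or_false] at hp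
    rcases hp with rfl | rfl
    · obtain ⟨h, ha, hb⟩ := (consecOcc_132 π i).mp hocc
      exact hN i h ⟨ha.trans hb, hb⟩
    · obtain ⟨h, ha, hb⟩ := (consecOcc_231 π i).mp hocc
      exact hN i h ⟨hb, ha.trans hb⟩

/-! ### The valley permutation associated to a subset -/

lemma card_le (T : Finset (Fin n)) : T.card ≤ n :=
  le_trans (Finset.card_le_univ T) (le_of_eq (Finset.card_fin n))

lemma compl_card (T : Finset (Fin n)) : Tᶜ.card = n - T.card := by
  simp [Finset.card_compl]

noncomputable def vp (T : Finset (Fin n)) : Fin n → Fin n := fun i =>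
  if h : i.val < T.card then
    T.orderEmbOfFin rfl ⟨T.card - 1 - i.val, by omega⟩
  else
    Tᶜ.orderEmbOfFin (compl_card T) ⟨i.val - T.card,
      by have := i.isLt; have := card_le T; omega⟩

lemma vp_lt (T : Finset (Fin n)) {i : Fin n} (h : i.val < T.card) :
    vp T i = T.orderEmbOfFin rfl ⟨T.card - 1 - i.val, by omega⟩ := dif_pos h

lemma vp_ge (T : Finset (Fin n)) {i : Fin n} (h : ¬ i.val < T.card) :
    vp T i = Tᶜ.orderEmbOfFin (compl_card T) ⟨i.val - T.card,
      by have := i.isLt; have := card_le T; omega⟩ := dif_neg h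

lemma vp_mem_lt (T : Finset (Fin n)) {i : Fin n} (h : i.val < T.card) : vp T i ∈ T := by
  rw [vp_lt T h]; exact Finset.orderEmbOfFin_mem _ _ _

lemma vp_mem_ge (T : Finset (Fin n)) {i : Fin n} (h : ¬ i.val < T.card) : vp T i ∈ Tᶜ := by
  rw [vp_ge T h]; exact Finset.orderEmbOfFin_mem _ _ _

lemma vp_injective (T : Finset (Fin n)) : Function.Injective (vp T) := by
  intro i j hij
  by_cases hi : i.val < T.card <;> by_cases hj : j.val < T.card
  · rw [vp_lt T hi, vp_lt T hj] at hij
    have h2 := congrArg Fin.val ((T.orderEmbOfFin rfl).injective hij)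
    simp only [Fin.val_mk] at h2
    exact Fin.ext (by omega)
  · exact absurd (hij ▸ vp_mem_lt T hi) (Finset.mem_compl.mp (vp_mem_ge T hj))
  · exact absurd (hij ▸ vp_mem_ge T hi) (by simpa using vp_mem_lt T hj)
  · rw [vp_ge T hi, vp_ge T hj] at hij
    have h2 := congrArg Fin.val ((Tᶜ.orderEmbOfFin (compl_card T)).injective hij)
    simp only [Fin.val_mk] at h2
    exact Fin.ext (by omega)

/-- The valley permutation. -/
noncomputable def valleyPerm (T : Finset (Fin n)) : Equiv.Perm (Fin n) :=
  Equiv.ofBijective (vp T) (Finite.injective_iff_bijective.mp (vp_injective T))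

lemma valleyPerm_apply (T : Finset (Fin n)) (i : Fin n) : valleyPerm T i = vp T i := rfl

lemma vp_zero [NeZero n] {T : Finset (Fin n)} (h0 : 0 ∉ T) (hlt : T.card < n) :
    vp T ⟨T.card, hlt⟩ = 0 := by
  rw [vp_ge T (by simp)]
  have h1 : (⟨T.card - T.card, by have := card_le T; omega⟩ : Fin (n - T.card))
      = ⟨0, by omega⟩ := Fin.ext (by simp)
  rw [h1, Finset.orderEmbOfFin_zero (compl_card T) (by omega)]
  refine le_antisymm (Finset.min'_le _ 0 (by simpa using h0)) (Fin.zero_le _)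

lemma vp_ascent_iff [NeZero n] {T : Finset (Fin n)} (h0 : 0 ∉ T) {i : ℕ} (h2 : i + 2 ≤ n) :
    (vp T ⟨i, by omega⟩ < vp T ⟨i+1, by omega⟩ ↔ T.card ≤ i) := by
  rcases lt_trichotomy (i+1) T.card with hc | hc | hc
  · rw [vp_lt T (show i < T.card by omega), vp_lt T (show i+1 < T.card from hc)]
    have hmono := (T.orderEmbOfFin rfl).strictMono
      (show (⟨T.card - 1 - (i+1), by omega⟩ : Fin T.card) < ⟨T.card - 1 - i, by omega⟩ from
        by simp only [Fin.mk_lt_mk]; omega)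
    constructor
    · intro h; exact absurd h (lt_asymm hmono)
    · intro h; omega
  · have h1 : (⟨i+1, by omega⟩ : Fin n) = ⟨T.card, by omega⟩ := Fin.ext (show i+1 = T.card by omega)
    rw [h1, vp_zero h0 (by omega)]
    have h3 : vp T ⟨i, by omega⟩ ∈ T := vp_mem_lt T (show i < T.card by omega)
    constructor
    · intro h; exact absurd h (by simp [Fin.le_zero_iff'])
    · intro h; omega
  · rw [vp_ge T (show ¬ (i:ℕ) < T.card by simp only [not_lt]; omega),
      vp_ge T (show ¬ (i+1:ℕ) < T.card by simp only [not_lt]; omega)]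
    have hmono := (Tᶜ.orderEmbOfFin (compl_card T)).strictMono
      (show (⟨i - T.card, by have := card_le T; omega⟩ : Fin (n - T.card))
        < ⟨i + 1 - T.card, by have := card_le T; omega⟩ from by simp only [Fin.mk_lt_mk]; omega)
    exact ⟨fun _ => by omega, fun _ => hmono⟩

lemma vp_descent_iff [NeZero n] {T : Finset (Fin n)} (h0 : 0 ∉ T) {i : ℕ} (h2 : i + 2 ≤ n) :
    (vp T ⟨i+1, by omega⟩ < vp T ⟨i, by omega⟩ ↔ i < T.card) := by
  have hne : vp T ⟨i+1, by omega⟩ ≠ vp T ⟨i, by omega⟩ := by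
    intro h
    have := vp_injective T h
    simp only [Fin.mk.injEq] at this; omega
  rcases lt_or_gt_of_ne hne with h | h
  · constructor
    · intro hlt
      by_contra hge
      exact absurd ((vp_ascent_iff h0 h2).mpr (by omega)) (not_lt.mpr hlt.le)
    · intro _; exact h
  · constructor
    · intro hlt; exact absurd hlt (lt_asymm h)
    · intro hlt
      exact absurd ((vp_ascent_iff h0 h2).mp h) (by omega)

lemma noPeak_valleyPerm [NeZero n] {T : Finset (Fin n)} (h0 : 0 ∉ T) :
    NoPeak (valleyPerm T) := by
  intro i h hpk
  obtain ⟨h1, h2⟩ := hpk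
  have ha : T.card ≤ i := (vp_ascent_iff h0 (show i + 2 ≤ n by omega)).mp h1
  have hd : i + 1 < T.card := (vp_descent_iff h0 (show (i+1) + 2 ≤ n by omega)).mp h2
  omega

/-! ### Structure of no-peak permutations -/

section Structure

variable {π : Equiv.Perm (Fin n)}

lemma asc_prop (hπ : NoPeak π) {i : ℕ} (hi : i + 2 ≤ n)
    (h : π ⟨i, by omega⟩ < π ⟨i+1, by omega⟩) :
    ∀ j : ℕ, i ≤ j → ∀ hj : j + 2 ≤ n, π ⟨j, by omega⟩ < π ⟨j+1, by omega⟩ := by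
  intro j hij
  induction j, hij using Nat.le_induction with
  | base => intro hj; exact h
  | succ j hij IH =>
    intro hj
    have hasc := IH (by omega)
    have hne : π ⟨j+1+1, by omega⟩ ≠ π ⟨j+1, by omega⟩ := by
      intro he
      have := π.injective he
      simp only [Fin.mk.injEq] at this; omega
    rcases lt_or_gt_of_ne hne with hlt | hgt
    · exact absurd ⟨hasc, hlt⟩ (hπ j (by omega))
    · exact hgt

set_option maxHeartbeats 2000000 in
lemma noPeak_ascent_iff [NeZero n] (hπ : NoPeak π) {i : ℕ} (h2 : i + 2 ≤ n) :
    (π ⟨i, by omega⟩ < π ⟨i+1, by omega⟩ ↔ (π.symm 0).val ≤ i) := by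
  have key : ∀ (m : ℕ) (hmn : m < n), π ⟨m, hmn⟩ = 0 →
      (π ⟨i, by omega⟩ < π ⟨i+1, by omega⟩ ↔ m ≤ i) := by
    intro m hmn hm
    constructor
    · intro hasc
      by_contra hge
      push_neg at hge
      have h3 := asc_prop hπ (by omega) hasc (m-1) (by omega) (by omega)
      have h4 : (⟨m-1+1, by omega⟩ : Fin n) = ⟨m, hmn⟩ := Fin.ext (show m-1+1 = m by omega)
      rw [h4, hm] at h3
      exact absurd h3 ((Fin.zero_le _).not_gt)
    · intro hge
      have hne : π ⟨m+1, by omega⟩ ≠ π ⟨m, hmn⟩ := by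
        intro he
        have := π.injective he
        simp only [Fin.mk.injEq] at this; omega
      rw [hm] at hne
      have hasc : π ⟨m, by omega⟩ < π ⟨m+1, by omega⟩ := by
        have h5 : π ⟨m, by omega⟩ = 0 := hm
        rw [h5]
        exact (Fin.pos_iff_ne_zero' _).mpr hne
      exact asc_prop hπ (by omega) hasc i hge h2
  refine key (π.symm 0).val (π.symm 0).isLt ?_
  have h6 : (⟨(π.symm 0).val, (π.symm 0).isLt⟩ : Fin n) = π.symm 0 := Fin.eta _ _
  rw [h6, Equiv.apply_symm_apply]

lemma desc_chain [NeZero n] (hπ : NoPeak π) {p q : ℕ} (hpq : p < q) (hq : q ≤ (π.symm 0).val)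
    (hqn : q < n) : π ⟨q, hqn⟩ < π ⟨p, by omega⟩ := by
  induction q with
  | zero => omega
  | succ q IH =>
    have hdesc : π ⟨q+1, hqn⟩ < π ⟨q, by omega⟩ := by
      have hne : π ⟨q+1, by omega⟩ ≠ π ⟨q, by omega⟩ := by
        intro he
        have := π.injective he
        simp only [Fin.mk.injEq] at this; omega
      rcases lt_or_gt_of_ne hne with hlt | hgt
      · exact hlt
      · exact absurd ((noPeak_ascent_iff hπ (by omega)).mp hgt) (by omega)
    rcases Nat.lt_or_ge p q with h | h
    · exact hdesc.trans (IH h (by omega) (by omega))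
    · have : p = q := by omega
      subst this
      exact hdesc

lemma asc_chain [NeZero n] (hπ : NoPeak π) {p q : ℕ} (hp : (π.symm 0).val ≤ p) (hpq : p < q)
    (hqn : q < n) : π ⟨p, by omega⟩ < π ⟨q, hqn⟩ := by
  induction q with
  | zero => omega
  | succ q IH =>
    have hasc : π ⟨q, by omega⟩ < π ⟨q+1, hqn⟩ :=
      (noPeak_ascent_iff hπ (by omega)).mpr (by omega)
    rcases Nat.lt_or_ge p q with h | h
    · exact (IH h (by omega)).trans hasc
    · have : p = q := by omega
      subst this
      exact hasc

/-- The set of values appearing before the minimum. -/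
def Tof [NeZero n] (π : Equiv.Perm (Fin n)) : Finset (Fin n) :=
  Finset.univ.filter (fun x => (π.symm x).val < (π.symm 0).val)

lemma Tof_zero_notMem [NeZero n] : 0 ∉ Tof π := by
  simp [Tof]

lemma Tof_card [NeZero n] : (Tof π).card = (π.symm 0).val := by
  have himg : Tof π = Finset.image π
      (Finset.filter (fun j : Fin n => j.val < (π.symm 0).val) Finset.univ) := by
    ext x
    simp only [Tof, Finset.mem_filter, Finset.mem_univ, true_and, Finset.mem_image]
    constructor
    · intro hx; exact ⟨π.symm x, hx, Equiv.apply_symm_apply _ _⟩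
    · rintro ⟨j, hj, rfl⟩; rwa [Equiv.symm_apply_apply]
  rw [himg, Finset.card_image_of_injective _ π.injective]
  have h2 : Finset.filter (fun j : Fin n => j.val < (π.symm 0).val) Finset.univ
      = Finset.Iio (π.symm 0) := by
    ext j
    simp only [Finset.mem_filter, Finset.mem_univ, true_and, Finset.mem_Iio, Fin.lt_def]
  rw [h2, Fin.card_Iio]

lemma valleyPerm_Tof [NeZero n] (hπ : NoPeak π) : valleyPerm (Tof π) = π := by
  have hcard : (Tof π).card = (π.symm 0).val := Tof_card
  have hmn : (π.symm 0).val < n := (π.symm 0).isLt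
  apply Equiv.ext
  intro i
  rw [valleyPerm_apply]
  by_cases hi : i.val < (Tof π).card
  · have hmem : ∀ x : Fin (Tof π).card,
        π ⟨(π.symm 0).val - 1 - x.val, by omega⟩ ∈ Tof π := by
      intro x
      have hx := x.isLt
      simp only [Tof, Finset.mem_filter, Finset.mem_univ, true_and, Equiv.symm_apply_apply]
      omega
    have hmono : StrictMono (fun x : Fin (Tof π).card =>
        π ⟨(π.symm 0).val - 1 - x.val, by omega⟩) := by
      intro x y hxy
      have hx := x.isLt
      have hy := y.isLt
      exact desc_chain hπ (p := (π.symm 0).val - 1 - y.val) (q := (π.symm 0).val - 1 - x.val)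
        (by omega) (by omega) (by omega)
    have hfeq := Finset.orderEmbOfFin_unique (rfl : (Tof π).card = (Tof π).card)
      hmem hmono
    rw [vp_lt _ hi, ← hfeq]
    have hival := i.isLt
    exact congrArg π (Fin.ext
      (show (π.symm 0).val - 1 - ((Tof π).card - 1 - i.val) = i.val by omega))
  · have hmem : ∀ x : Fin (n - (Tof π).card),
        π ⟨(π.symm 0).val + x.val, by have := x.isLt; omega⟩ ∈ (Tof π)ᶜ := by
      intro x
      simp only [Finset.mem_compl, Tof, Finset.mem_filter, Finset.mem_univ, true_and,
        Equiv.symm_apply_apply, not_lt]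
      omega
    have hmono : StrictMono (fun x : Fin (n - (Tof π).card) =>
        π ⟨(π.symm 0).val + x.val, by have := x.isLt; omega⟩) := by
      intro x y hxy
      have hy := y.isLt
      exact asc_chain hπ (p := (π.symm 0).val + x.val) (q := (π.symm 0).val + y.val)
        (by omega) (by omega) (by omega)
    have hgeq := Finset.orderEmbOfFin_unique (compl_card (Tof π)) hmem hmono
    rw [vp_ge _ hi, ← hgeq]
    have hival := i.isLt
    exact congrArg π (Fin.ext
      (show (π.symm 0).val + (i.val - (Tof π).card) = i.val by omega))

end Structure

/-! ### Recovering T from its valley permutation -/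

lemma card_lt [NeZero n] {T : Finset (Fin n)} (h0 : 0 ∉ T) : T.card < n := by
  rcases lt_or_eq_of_le (card_le T) with h | h
  · exact h
  · exfalso
    have : T = Finset.univ := Finset.eq_univ_of_card T (h.trans (Finset.card_fin n).symm)
    exact h0 (this ▸ Finset.mem_univ 0)

lemma mem_valleyPerm_iff [NeZero n] {T : Finset (Fin n)} (h0 : 0 ∉ T) (x : Fin n) :
    x ∈ T ↔ ((valleyPerm T).symm x).val < T.card := by
  constructor
  · intro hx
    by_contra hge
    have := vp_mem_ge T hge
    rw [← valleyPerm_apply, Equiv.apply_symm_apply] at this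
    exact (Finset.mem_compl.mp this) hx
  · intro hlt
    have := vp_mem_lt T hlt
    rwa [← valleyPerm_apply, Equiv.apply_symm_apply] at this

lemma symm_zero_valleyPerm [NeZero n] {T : Finset (Fin n)} (h0 : 0 ∉ T) :
    ((valleyPerm T).symm 0).val = T.card := by
  have h1 : valleyPerm T ⟨T.card, card_lt h0⟩ = 0 := vp_zero h0 (card_lt h0)
  have := congrArg (valleyPerm T).symm h1
  rw [Equiv.symm_apply_apply] at this
  rw [← this]

lemma valleyPerm_injective [NeZero n] {T T' : Finset (Fin n)} (h0 : 0 ∉ T) (h0' : 0 ∉ T')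
    (h : valleyPerm T = valleyPerm T') : T = T' := by
  have hc : T.card = T'.card := by
    rw [← symm_zero_valleyPerm h0, ← symm_zero_valleyPerm h0', h]
  ext x
  rw [mem_valleyPerm_iff h0 x, mem_valleyPerm_iff h0' x, h, hc]

/-! ### Counting occurrences of 321 in a valley permutation -/

lemma consecOcc_321_valleyPerm [NeZero n] {T : Finset (Fin n)} (h0 : 0 ∉ T) (i : ℕ) :
    ConsecOcc p321 (valleyPerm T) i ↔ i + 2 ≤ T.card := by
  rw [consecOcc_321]
  constructor
  · rintro ⟨h, h1, h2⟩
    have d1 : i < T.card := (vp_descent_iff h0 (show i + 2 ≤ n by omega)).mp h1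
    have d2 : i + 1 < T.card := (vp_descent_iff h0 (show (i+1) + 2 ≤ n by omega)).mp h2
    omega
  · intro hle
    have hn : i + 3 ≤ n := by have := card_lt h0; omega
    exact ⟨hn, (vp_descent_iff h0 (by omega)).mpr (by omega),
      (vp_descent_iff h0 (show (i+1)+2 ≤ n by omega)).mpr (by omega)⟩

lemma occCount_valleyPerm [NeZero n] {T : Finset (Fin n)} (h0 : 0 ∉ T) :
    occCount p321 (valleyPerm T) = T.card - 1 := by
  unfold occCount
  have e1 : {i : ℕ // ConsecOcc p321 (valleyPerm T) i} ≃ {i : ℕ // i + 2 ≤ T.card} :=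
    Equiv.subtypeEquivRight (consecOcc_321_valleyPerm h0)
  have e2 : {i : ℕ // i + 2 ≤ T.card} ≃ Fin (T.card - 1) :=
    { toFun := fun x => ⟨x.1, by have := x.2; omega⟩
      invFun := fun k => ⟨k.1, by have := k.isLt; omega⟩
      left_inv := fun x => rfl
      right_inv := fun k => rfl }
  rw [Nat.card_congr (e1.trans e2), Nat.card_eq_fintype_card, Fintype.card_fin]

/-! ### Summation lemmas -/

lemma sum_powerset_card {α : Type*} [DecidableEq α] (s : Finset α) :
    ∑ T ∈ s.powerset, T.card = s.card * 2 ^ (s.card - 1) := by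
  induction s using Finset.induction_on with
  | empty => simp
  | @insert a s ha IH =>
    rw [Finset.sum_powerset_insert ha]
    have h1 : ∑ T ∈ s.powerset, (insert a T).card = ∑ T ∈ s.powerset, (T.card + 1) := by
      refine Finset.sum_congr rfl (fun T hT => ?_)
      rw [Finset.card_insert_of_notMem (fun haT => ha (Finset.mem_powerset.mp hT haT))]
    rw [h1, Finset.sum_add_distrib, Finset.sum_const, Finset.card_powerset, smul_eq_mul,
      mul_one, IH, Finset.card_insert_of_notMem ha]
    rcases Nat.eq_zero_or_pos s.card with hc | hc
    · rw [hc]; ring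
    · have e : 2 ^ s.card = 2 * 2 ^ (s.card - 1) := by
        conv_lhs => rw [show s.card = (s.card - 1) + 1 by omega]
        rw [pow_succ]; ring
      rw [Nat.add_sub_cancel, e]; ring

end Stmt17

theorem stmt17 (n : ℕ) (hn : 2 ≤ n) :
    classCard n (AvoidsAll [p132, p231]) = 2 ^ (n - 1)
    ∧ (totOcc p321 (AvoidsAll (n := n) [p132, p231]) : ℤ)
        = ((n : ℤ) - 1) * 2 ^ (n - 2) - 2 ^ (n - 1) + 1 := by
  classical
  have hnz : NeZero n := ⟨by omega⟩
  set P : Equiv.Perm (Fin n) → Prop := AvoidsAll [p132, p231] with hP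
  let E : {T : Finset (Fin n) // (0 : Fin n) ∉ T} ≃ {π : Equiv.Perm (Fin n) // P π} :=
  { toFun := fun T => ⟨Stmt17.valleyPerm T.1,
      (Stmt17.avoids_iff_noPeak _).mpr (Stmt17.noPeak_valleyPerm T.2)⟩
    invFun := fun π => ⟨Stmt17.Tof π.1, Stmt17.Tof_zero_notMem⟩
    left_inv := fun T => by
      refine Subtype.ext ?_
      refine Stmt17.valleyPerm_injective Stmt17.Tof_zero_notMem T.2 ?_
      exact Stmt17.valleyPerm_Tof (Stmt17.noPeak_valleyPerm T.2)
    right_inv := fun π => by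
      refine Subtype.ext ?_
      exact Stmt17.valleyPerm_Tof ((Stmt17.avoids_iff_noPeak _).mp π.2) }
  have hsetT : Finset.univ.filter (fun T : Finset (Fin n) => (0 : Fin n) ∉ T)
      = (Finset.univ.erase (0 : Fin n)).powerset := by
    ext T
    simp only [Finset.mem_filter, Finset.mem_univ, true_and, Finset.mem_powerset,
      Finset.subset_erase]
    exact ⟨fun h => ⟨Finset.subset_univ T, h⟩, fun h => h.2⟩
  have hcardP : (Finset.univ.erase (0 : Fin n)).card = n - 1 := by
    rw [Finset.card_erase_of_mem (Finset.mem_univ _), Finset.card_fin]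
  constructor
  · -- cardinality
    have h1 : classCard n P = Nat.card {T : Finset (Fin n) // (0 : Fin n) ∉ T} :=
      Nat.card_congr E.symm
    rw [h1, Nat.card_eq_fintype_card, Fintype.card_subtype, hsetT, Finset.card_powerset,
      hcardP]
  · -- total occurrences
    have key : totOcc p321 P = ∑ T ∈ (Finset.univ.erase (0 : Fin n)).powerset, (T.card - 1) := by
      have s1 : totOcc p321 P
          = ∑ π ∈ Finset.univ.filter P, occCount p321 π := by
        rw [Finset.sum_filter]
        unfold totOcc
        apply Finset.sum_congr rfl
        intro π _
        congr 1
      have s2 : ∑ π ∈ Finset.univ.filter P, occCount p321 π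
          = ∑ x : {π : Equiv.Perm (Fin n) // P π}, occCount p321 x.1 :=
        Finset.sum_subtype _ (by simp) _
      have s3 : ∑ x : {π : Equiv.Perm (Fin n) // P π}, occCount p321 x.1
          = ∑ T : {T : Finset (Fin n) // (0 : Fin n) ∉ T}, occCount p321 (Stmt17.valleyPerm T.1) :=
        (Fintype.sum_equiv E (fun T => occCount p321 (Stmt17.valleyPerm T.1))
          (fun x => occCount p321 x.1) (fun T => rfl)).symm
      have s4 : ∑ T : {T : Finset (Fin n) // (0 : Fin n) ∉ T},
            occCount p321 (Stmt17.valleyPerm T.1)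
          = ∑ T : {T : Finset (Fin n) // (0 : Fin n) ∉ T}, (T.1.card - 1) := by
        apply Finset.sum_congr rfl
        intro T _
        exact Stmt17.occCount_valleyPerm T.2
      have s5 : ∑ T ∈ (Finset.univ.erase (0 : Fin n)).powerset, (T.card - 1)
          = ∑ T : {T : Finset (Fin n) // (0 : Fin n) ∉ T}, (T.1.card - 1) :=
        Finset.sum_subtype _ (by
          intro T
          rw [Finset.mem_powerset, Finset.subset_erase]
          exact ⟨fun h => h.2, fun h => ⟨Finset.subset_univ T, h⟩⟩) _
      rw [s1, s2, s3, s4, ← s5]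
    rw [key]
    rw [Nat.cast_sum]
    have term : ∀ T ∈ (Finset.univ.erase (0 : Fin n)).powerset,
        ((T.card - 1 : ℕ) : ℤ) = ((T.card : ℤ) - 1) + (if T = ∅ then 1 else 0) := by
      intro T _
      rcases eq_or_ne T ∅ with rfl | hT
      · simp
      · have : 1 ≤ T.card := Finset.card_pos.mpr (Finset.nonempty_of_ne_empty hT)
        rw [if_neg hT]
        push_cast [this]
        ring
    rw [Finset.sum_congr rfl term, Finset.sum_add_distrib, Finset.sum_ite_eq'
      ((Finset.univ.erase (0 : Fin n)).powerset) (∅ : Finset (Fin n)) (fun _ => (1 : ℤ)),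
      if_pos (Finset.empty_mem_powerset _), Finset.sum_sub_distrib, Finset.sum_const,
      Finset.card_powerset, hcardP]
    have hsum : ∑ T ∈ (Finset.univ.erase (0 : Fin n)).powerset, (T.card : ℤ)
        = ((n : ℤ) - 1) * 2 ^ (n - 2) := by
      have := Stmt17.sum_powerset_card (Finset.univ.erase (0 : Fin n))
      rw [hcardP] at this
      have hcast := congrArg (fun k : ℕ => (k : ℤ)) this
      push_cast at hcast
      rw [hcast]
      have h1 : ((n : ℤ) - 1) = ((n - 1 : ℕ) : ℤ) := by push_cast [hn]; omega
      have h2 : (n - 1 : ℕ) - 1 = n - 2 := by omega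
      rw [h1, h2]
    rw [hsum]
    push_cast
    ring
end

section
/- In the class Av(132,231): 321_n/(n·|Av_n(132,231)|) → 1/2, 123_n/(n·|Av_n(132,231)|) → 1/2, 213_n/(n·|Av_n(132,231)|) → 0, and 312_n/(n·|Av_n(132,231)|) → 0, as n → ∞. -/
/-!
Avoiding `132` and `231` consecutively means having no peak `π(i) < π(i+1) > π(i+2)`, so once
`π` ascends it keeps ascending: every descent comes before every ascent. Hence every window of
length three is an occurrence of `123`, of `321`, or a valley (`213` or `312`), and there is at
most one valley. Summed over the class, the four counts add up to `(n - 2) |Av_n|` while the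
valleys contribute at most `|Av_n|`. Reversal preserves the class and exchanges `123` with `321`,
so each of these two gets half of the total up to `O(|Av_n|)`.
-/

open Filter Finset

variable {n r : ℕ}

/-- `π` as a word of naturals; positions `≥ n` read as `0`. -/
def permVal (π : Equiv.Perm (Fin n)) (k : ℕ) : ℕ :=
  if h : k < n then π ⟨k, h⟩ else 0

lemma permVal_of_lt (π : Equiv.Perm (Fin n)) {k : ℕ} (h : k < n) : permVal π k = π ⟨k, h⟩ :=
  dif_pos h

lemma permVal_ne (π : Equiv.Perm (Fin n)) {k l : ℕ} (hk : k < n) (hl : l < n) (hkl : k ≠ l) :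
    permVal π k ≠ permVal π l := by
  rw [permVal_of_lt π hk, permVal_of_lt π hl, Ne, ← Fin.ext_iff, π.injective.eq_iff, Fin.mk.injEq]
  exact hkl

@[simp]
lemma permVal_one {k : ℕ} (h : k < n) : permVal (1 : Equiv.Perm (Fin n)) k = k := by
  simp [permVal_of_lt _ h]

lemma consecOcc_iff {p : Fin r → ℕ} {π : Equiv.Perm (Fin n)} {i : ℕ} :
    ConsecOcc p π i ↔
      i + r ≤ n ∧ ∀ j k : Fin r, (permVal π (i + j) < permVal π (i + k) ↔ p j < p k) := by
  refine ⟨fun ⟨h, H⟩ => ⟨h, fun j k => ?_⟩, fun ⟨h, H⟩ => ⟨h, fun j k => ?_⟩⟩ <;>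
    simp only [permVal_of_lt π (Nat.lt_of_lt_of_le (Nat.add_lt_add_left (Fin.isLt _) i) h),
      Fin.lt_def] at H ⊢ <;>
    exact H j k

lemma ConsecOcc.lt_iff_lt {p q : Fin r → ℕ} {π : Equiv.Perm (Fin n)} {i : ℕ}
    (hp : ConsecOcc p π i) (hq : ConsecOcc q π i) (j k : Fin r) : p j < p k ↔ q j < q k :=
  (hp.2 j k).symm.trans (hq.2 j k)

lemma consecOcc_three_iff {p : Fin 3 → ℕ} (hp : Function.Injective p) {π : Equiv.Perm (Fin n)}
    {i : ℕ} :
    ConsecOcc p π i ↔ i + 3 ≤ n ∧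
      (permVal π i < permVal π (i + 1) ↔ p 0 < p 1) ∧
      (permVal π i < permVal π (i + 2) ↔ p 0 < p 2) ∧
      (permVal π (i + 1) < permVal π (i + 2) ↔ p 1 < p 2) := by
  rw [consecOcc_iff]
  refine and_congr_right fun hi => ⟨fun h => ⟨h 0 1, h 0 2, h 1 2⟩, fun ⟨h01, h02, h12⟩ => ?_⟩
  have := permVal_ne π (k := i) (l := i + 1) (by omega) (by omega) (by omega)
  have := permVal_ne π (k := i) (l := i + 2) (by omega) (by omega) (by omega)
  have := permVal_ne π (k := i + 1) (l := i + 2) (by omega) (by omega) (by omega)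
  have := hp.ne (a₁ := 0) (a₂ := 1) (by decide)
  have := hp.ne (a₁ := 0) (a₂ := 2) (by decide)
  have := hp.ne (a₁ := 1) (a₂ := 2) (by decide)
  intro j k
  fin_cases j <;> fin_cases k <;> simp only [Fin.zero_eta, Fin.mk_one, Fin.reduceFinMk,
    add_zero] <;> omega

@[simp]
lemma mul_revPerm_mul_revPerm (π : Equiv.Perm (Fin n)) : π * Fin.revPerm * Fin.revPerm = π :=
  Equiv.ext fun j => by simp

@[simp]
lemma comp_rev_comp_rev {α : Type*} (p : Fin r → α) : (p ∘ Fin.rev) ∘ Fin.rev = p :=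
  funext fun j => by simp

lemma ConsecOcc.reverse {p : Fin r → ℕ} {π : Equiv.Perm (Fin n)} {i : ℕ} (h : ConsecOcc p π i) :
    ConsecOcc (p ∘ Fin.rev) (π * Fin.revPerm) (n - r - i) := by
  obtain ⟨hi, h⟩ := h
  refine ⟨by omega, fun j k => ?_⟩
  have hpos (m : Fin r) (hm : n - r - i + m < n) (hm' : i + m.rev < n) :
      (π * Fin.revPerm : Equiv.Perm (Fin n)) ⟨n - r - i + m, hm⟩ = π ⟨i + m.rev, hm'⟩ := by
    simp only [Equiv.Perm.mul_apply, Fin.revPerm_apply]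
    congr 1
    ext
    simp only [Fin.val_rev]
    omega
  rw [hpos j _ (by omega), hpos k _ (by omega)]
  exact h j.rev k.rev

lemma ConsecOcc.of_reverse {p : Fin r → ℕ} {π : Equiv.Perm (Fin n)} {i : ℕ}
    (h : ConsecOcc (p ∘ Fin.rev) (π * Fin.revPerm) i) : ConsecOcc p π (n - r - i) := by
  simpa using h.reverse

lemma occCount_reverse (p : Fin r → ℕ) (π : Equiv.Perm (Fin n)) :
    occCount (p ∘ Fin.rev) (π * Fin.revPerm) = occCount p π :=
  Nat.card_congr
    { toFun := fun i => ⟨n - r - i, i.2.of_reverse⟩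
      invFun := fun i => ⟨n - r - i, i.2.reverse⟩
      left_inv := fun ⟨i, ⟨hi, _⟩⟩ => Subtype.ext (by dsimp only; omega)
      right_inv := fun ⟨i, ⟨hi, _⟩⟩ => Subtype.ext (by dsimp only; omega) }

lemma AvoidsAll.reverse {ps : List (Fin r → ℕ)} (hps : ∀ p ∈ ps, p ∘ Fin.rev ∈ ps)
    {π : Equiv.Perm (Fin n)} (h : AvoidsAll ps π) : AvoidsAll ps (π * Fin.revPerm) :=
  fun p hp _ hocc => h _ (hps p hp) _ (by simpa using hocc.reverse)

lemma avoidsAll_mul_revPerm_iff {ps : List (Fin r → ℕ)} (hps : ∀ p ∈ ps, p ∘ Fin.rev ∈ ps)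
    (π : Equiv.Perm (Fin n)) : AvoidsAll ps (π * Fin.revPerm) ↔ AvoidsAll ps π :=
  ⟨fun h => by simpa using h.reverse hps, (·.reverse hps)⟩

lemma totOcc_comp_rev (p : Fin r → ℕ) {P : Equiv.Perm (Fin n) → Prop}
    (hP : ∀ π, P (π * Fin.revPerm) ↔ P π) : totOcc (p ∘ Fin.rev) P = totOcc p P := by
  classical
  refine Fintype.sum_equiv (Equiv.mulRight Fin.revPerm) _ _ fun π => ?_
  simp only [Equiv.coe_mulRight, hP]
  rw [← occCount_reverse p (π * Fin.revPerm), mul_revPerm_mul_revPerm]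

lemma occCount_eq_card (p : Fin r → ℕ) (π : Equiv.Perm (Fin n)) [DecidablePred (ConsecOcc p π)] :
    occCount p π = #{i ∈ range (n + 1 - r) | ConsecOcc p π i} := by
  rw [occCount, ← Nat.card_eq_finsetCard]
  refine Nat.card_congr (Equiv.subtypeEquivRight fun i => ?_)
  simp only [mem_filter, mem_range, iff_and_self]
  exact fun h => by have := h.1; omega

lemma occCount_eq_zero {ps : List (Fin r → ℕ)} {p : Fin r → ℕ} (hp : p ∈ ps)
    {π : Equiv.Perm (Fin n)} (h : AvoidsAll ps π) : occCount p π = 0 :=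
  have : IsEmpty {i // ConsecOcc p π i} := ⟨fun i => h p hp i i.2⟩
  Nat.card_of_isEmpty

lemma classCard_eq_card (P : Equiv.Perm (Fin n) → Prop) [DecidablePred P] :
    classCard n P = #{π | P π} := by
  rw [classCard, Nat.card_eq_fintype_card, Fintype.card_subtype]

lemma totOcc_eq_sum (p : Fin r → ℕ) (P : Equiv.Perm (Fin n) → Prop) [DecidablePred P] :
    totOcc p P = ∑ π with P π, occCount p π := by
  rw [totOcc, sum_filter]
  congr! 2

lemma occCount_sum_of_length_three (π : Equiv.Perm (Fin n)) :
    occCount p123 π + occCount p132 π + occCount p213 π + occCount p231 π + occCount p312 π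
      + occCount p321 π = n - 2 := by
  classical
  simp only [occCount_eq_card, card_filter, ← sum_add_distrib]
  rw [show n + 1 - 3 = n - 2 by omega]
  refine (sum_congr rfl fun i hi => ?_).trans (by simp : ∑ _ ∈ range (n - 2), 1 = n - 2)
  rw [mem_range] at hi
  have := permVal_ne π (k := i) (l := i + 1) (by omega) (by omega) (by omega)
  have := permVal_ne π (k := i) (l := i + 2) (by omega) (by omega) (by omega)
  have := permVal_ne π (k := i + 1) (l := i + 2) (by omega) (by omega) (by omega)
  rw [consecOcc_three_iff (by decide : Function.Injective p123),
    consecOcc_three_iff (by decide : Function.Injective p132),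
    consecOcc_three_iff (by decide : Function.Injective p213),
    consecOcc_three_iff (by decide : Function.Injective p231),
    consecOcc_three_iff (by decide : Function.Injective p312),
    consecOcc_three_iff (by decide : Function.Injective p321)]
  simp only [p123, p132, p213, p231, p312, p321, Matrix.cons_val_zero, Matrix.cons_val_one,
    Matrix.cons_val, Nat.reduceLT, iff_true, iff_false]
  split_ifs <;> omega

lemma avoidsAll_132_231_iff (π : Equiv.Perm (Fin n)) :
    AvoidsAll [p132, p231] π ↔ ∀ i, i + 3 ≤ n →
      ¬ (permVal π i < permVal π (i + 1) ∧ permVal π (i + 2) < permVal π (i + 1)) := by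
  simp only [AvoidsAll, List.forall_mem_cons, List.not_mem_nil, IsEmpty.forall_iff,
    implies_true, and_true, ← forall_and]
  refine forall_congr' fun i => ?_
  rw [consecOcc_three_iff (by decide : Function.Injective p132),
    consecOcc_three_iff (by decide : Function.Injective p231)]
  simp only [p132, p231, Matrix.cons_val_zero, Matrix.cons_val_one, Matrix.cons_val,
    Nat.reduceLT, iff_true, iff_false]
  by_cases hi : i + 3 ≤ n
  · have := permVal_ne π (k := i) (l := i + 2) (by omega) (by omega) (by omega)
    have := permVal_ne π (k := i + 1) (l := i + 2) (by omega) (by omega) (by omega)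
    simp only [hi, true_and, forall_const, ← not_or]
    exact not_congr ⟨fun h => ⟨by omega, by omega⟩, fun h => by omega⟩
  · simp [hi]

lemma ascent_of_le {π : Equiv.Perm (Fin n)} (hA : AvoidsAll [p132, p231] π) {k m : ℕ}
    (hk : permVal π k < permVal π (k + 1)) (hkm : k ≤ m) (hm : m + 2 ≤ n) :
    permVal π m < permVal π (m + 1) := by
  induction m, hkm using Nat.le_induction with
  | base => exact hk
  | succ m hkm ih =>
    have hpeak := (avoidsAll_132_231_iff π).1 hA m (by omega)
    have := permVal_ne π (k := m + 1) (l := m + 2) (by omega) (by omega) (by omega)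
    have := ih (by omega)
    show permVal π (m + 1) < permVal π (m + 2)
    omega

lemma descent_lt_ascent {π : Equiv.Perm (Fin n)} (hA : AvoidsAll [p132, p231] π) {j k : ℕ}
    (hj : permVal π (j + 1) < permVal π j) (hj' : j + 2 ≤ n)
    (hk : permVal π k < permVal π (k + 1)) : j < k := by
  by_contra! hkj
  have := ascent_of_le hA hk hkj hj'
  omega

lemma consecOcc_213_or_312_iff {π : Equiv.Perm (Fin n)} {i : ℕ} :
    ConsecOcc p213 π i ∨ ConsecOcc p312 π i ↔
      i + 3 ≤ n ∧ permVal π (i + 1) < permVal π i ∧ permVal π (i + 1) < permVal π (i + 2) := by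
  rw [consecOcc_three_iff (by decide : Function.Injective p213),
    consecOcc_three_iff (by decide : Function.Injective p312)]
  simp only [p213, p312, Matrix.cons_val_zero, Matrix.cons_val_one, Matrix.cons_val,
    Nat.reduceLT, iff_true, iff_false]
  by_cases hi : i + 3 ≤ n
  · have := permVal_ne π (k := i) (l := i + 1) (by omega) (by omega) (by omega)
    have := permVal_ne π (k := i) (l := i + 2) (by omega) (by omega) (by omega)
    constructor <;> intro h <;> omega
  · simp [hi]

lemma occCount_213_add_312_le_one {π : Equiv.Perm (Fin n)} (hA : AvoidsAll [p132, p231] π) :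
    occCount p213 π + occCount p312 π ≤ 1 := by
  classical
  have hdisj : Disjoint {i ∈ range (n + 1 - 3) | ConsecOcc p213 π i}
      {i ∈ range (n + 1 - 3) | ConsecOcc p312 π i} :=
    disjoint_filter.2 fun _ _ h213 h312 =>
      absurd ((h213.lt_iff_lt h312 0 2).1 (by decide)) (by decide)
  rw [occCount_eq_card, occCount_eq_card, ← card_union_of_disjoint hdisj, ← filter_or]
  refine card_le_one.2 fun i hi j hj => ?_
  obtain ⟨hi3, hi1, hi2⟩ := consecOcc_213_or_312_iff.1 (mem_filter.1 hi).2
  obtain ⟨hj3, hj1, hj2⟩ := consecOcc_213_or_312_iff.1 (mem_filter.1 hj).2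
  have := descent_lt_ascent hA hi1 (by omega) hj2
  have := descent_lt_ascent hA hj1 (by omega) hi2
  omega

lemma one_avoidsAll_132_231 : AvoidsAll [p132, p231] (1 : Equiv.Perm (Fin n)) :=
  (avoidsAll_132_231_iff 1).2 fun i hi => by
    simp only [permVal_one (by omega : i < n), permVal_one (by omega : i + 1 < n),
      permVal_one (by omega : i + 2 < n)]
    omega

lemma classCard_avoidsAll_132_231_pos : 0 < classCard n (AvoidsAll [p132, p231]) :=
  have : Nonempty {π : Equiv.Perm (Fin n) // AvoidsAll [p132, p231] π} :=
    ⟨⟨1, one_avoidsAll_132_231⟩⟩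
  Nat.card_pos

lemma totOcc_add_eq :
    totOcc p123 (AvoidsAll (n := n) [p132, p231])
        + totOcc p213 (AvoidsAll (n := n) [p132, p231])
        + totOcc p312 (AvoidsAll (n := n) [p132, p231])
        + totOcc p321 (AvoidsAll (n := n) [p132, p231])
      = (n - 2) * classCard n (AvoidsAll [p132, p231]) := by
  classical
  simp only [totOcc_eq_sum, classCard_eq_card, ← sum_add_distrib]
  rw [sum_congr rfl fun π hπ => ?_, sum_const, smul_eq_mul, mul_comm]
  have hA := (mem_filter.1 hπ).2
  have := occCount_sum_of_length_three π
  rw [occCount_eq_zero (p := p132) (by simp) hA, occCount_eq_zero (p := p231) (by simp) hA] at this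
  omega

lemma totOcc_213_add_312_le :
    totOcc p213 (AvoidsAll (n := n) [p132, p231]) + totOcc p312 (AvoidsAll (n := n) [p132, p231])
      ≤ classCard n (AvoidsAll [p132, p231]) := by
  classical
  simp only [totOcc_eq_sum, classCard_eq_card, ← sum_add_distrib]
  simpa using sum_le_card_nsmul _ _ 1 fun π hπ => occCount_213_add_312_le_one (mem_filter.1 hπ).2

lemma totOcc_321_eq_123 :
    totOcc p321 (AvoidsAll (n := n) [p132, p231]) = totOcc p123 (AvoidsAll (n := n) [p132, p231]) :=
  (show p321 = p123 ∘ Fin.rev by decide) ▸ totOcc_comp_rev _ (avoidsAll_mul_revPerm_iff (by decide))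

lemma totOcc_312_eq_213 :
    totOcc p312 (AvoidsAll (n := n) [p132, p231]) = totOcc p213 (AvoidsAll (n := n) [p132, p231]) :=
  (show p312 = p213 ∘ Fin.rev by decide) ▸ totOcc_comp_rev _ (avoidsAll_mul_revPerm_iff (by decide))

lemma tendsto_div_of_abs_sub_le {a C : ℕ → ℝ} {c K : ℝ} (hC : ∀ n, 0 < C n)
    (h : ∀ᶠ n in atTop, |a n - c * (n * C n)| ≤ K * C n) :
    Tendsto (fun n => a n / (n * C n)) atTop (nhds c) := by
  rw [tendsto_iff_norm_sub_tendsto_zero]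
  refine squeeze_zero' (.of_forall fun _ => norm_nonneg _) ?_
    (tendsto_const_div_atTop_nhds_zero_nat K)
  filter_upwards [h, eventually_gt_atTop 0] with n hn hn0
  have hnC : (0 : ℝ) < n * C n := mul_pos (by exact_mod_cast hn0) (hC n)
  rw [Real.norm_eq_abs, ← mul_div_cancel_right₀ c hnC.ne', ← sub_div, abs_div, abs_of_pos hnC,
    div_le_div_iff₀ hnC (by exact_mod_cast hn0)]
  nlinarith [hC n]

lemma abs_totOcc_321_sub_le (hn : 2 ≤ n) :
    |(totOcc p321 (AvoidsAll (n := n) [p132, p231]) : ℝ)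
        - 1 / 2 * (n * classCard n (AvoidsAll [p132, p231]))|
      ≤ 2 * classCard n (AvoidsAll [p132, p231]) := by
  have hsum := totOcc_add_eq (n := n)
  have hvalleys := totOcc_213_add_312_le (n := n)
  rw [← totOcc_321_eq_123] at hsum
  rify [hn] at hsum hvalleys
  have := Nat.cast_nonneg (α := ℝ) (totOcc p213 (AvoidsAll (n := n) [p132, p231]))
  have := Nat.cast_nonneg (α := ℝ) (totOcc p312 (AvoidsAll (n := n) [p132, p231]))
  rw [abs_le]
  constructor <;> linarith

lemma abs_totOcc_213_sub_le :
    |(totOcc p213 (AvoidsAll (n := n) [p132, p231]) : ℝ)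
        - 0 * (n * classCard n (AvoidsAll [p132, p231]))|
      ≤ 1 * classCard n (AvoidsAll [p132, p231]) := by
  have := totOcc_213_add_312_le (n := n)
  rw [zero_mul, sub_zero, one_mul, abs_of_nonneg (Nat.cast_nonneg _)]
  exact_mod_cast le_of_add_le_left this

theorem stmt18 :
    Filter.Tendsto (fun n : ℕ =>
        (totOcc p321 (AvoidsAll (n := n) [p132, p231]) : ℝ)
          / (n * classCard n (AvoidsAll [p132, p231])))
      Filter.atTop (nhds (1 / 2))
    ∧ Filter.Tendsto (fun n : ℕ =>
        (totOcc p123 (AvoidsAll (n := n) [p132, p231]) : ℝ)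
          / (n * classCard n (AvoidsAll [p132, p231])))
      Filter.atTop (nhds (1 / 2))
    ∧ Filter.Tendsto (fun n : ℕ =>
        (totOcc p213 (AvoidsAll (n := n) [p132, p231]) : ℝ)
          / (n * classCard n (AvoidsAll [p132, p231])))
      Filter.atTop (nhds 0)
    ∧ Filter.Tendsto (fun n : ℕ =>
        (totOcc p312 (AvoidsAll (n := n) [p132, p231]) : ℝ)
          / (n * classCard n (AvoidsAll [p132, p231])))
      Filter.atTop (nhds 0) := by
  have hC (n : ℕ) : (0 : ℝ) < classCard n (AvoidsAll [p132, p231]) :=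
    mod_cast classCard_avoidsAll_132_231_pos
  have h321 := tendsto_div_of_abs_sub_le hC
    (eventually_atTop.2 ⟨2, fun _ hn => abs_totOcc_321_sub_le hn⟩)
  have h213 := tendsto_div_of_abs_sub_le hC (.of_forall fun _ => abs_totOcc_213_sub_le)
  refine ⟨h321, ?_, h213, ?_⟩
  · simpa only [totOcc_321_eq_123] using h321
  · simpa only [totOcc_312_eq_213] using h213
end
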